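/- If R ∈ A⊗A⊗A satisfies R¹⊗aR²⊗R³ = R¹⊗R²⊗R³a for all a ∈ A, R¹R²⊗R³ = 1⊗1 and R²⊗R³R¹ = 1⊗1, then the hexagon-type identity R¹⊗R²⊗1⊗R³ = r¹R¹⊗r²⊗r³R²⊗R³ holds in A⊗A⊗A⊗A, where r is a second copy of R. -/

import Mathlib

open TensorProduct

/-! Contracting legs of `R` turns the hypotheses into the sandwich identities
`R¹aR² ⊗ R³ = 1 ⊗ a` and `R² ⊗ R³aR¹ = a ⊗ 1` for all `a`. The second one is inserted twice into
`R¹ ⊗ R² ⊗ 1 ⊗ R³`: first for the pair `R² ⊗ 1` in the middle legs, then for `R²r¹ ⊗ 1` sitting in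
the third and first legs. After that the legs of the original copy of `R` read `R¹(·)R²` and `R³`,
and the first identity collapses them. -/

theorem sum_apply_eq_of_sum_tmul_eq {R M N P ι : Type*} [CommSemiring R]
    [AddCommMonoid M] [AddCommMonoid N] [AddCommMonoid P] [Module R M] [Module R N] [Module R P]
    (f : M →ₗ[R] N →ₗ[R] P) {s : Finset ι} {u : ι → M} {v : ι → N} {m : M} {n : N}
    (h : ∑ i ∈ s, u i ⊗ₜ[R] v i = m ⊗ₜ n) : ∑ i ∈ s, f (u i) (v i) = f m n := by
  simpa only [map_sum, lift.tmul] using congrArg (lift f) h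

section RMatrix

variable {k A ι : Type*} [CommRing k] [Ring A] [Algebra k A] {s : Finset ι} {x y z : ι → A}
  (hcen : ∀ a : A,
    ∑ i ∈ s, x i ⊗ₜ[k] (a * y i) ⊗ₜ[k] z i = ∑ i ∈ s, x i ⊗ₜ[k] y i ⊗ₜ[k] (z i * a))
  (hstar : ∀ a : A, ∑ i ∈ s, (x i * a * y i) ⊗ₜ[k] z i = (1 : A) ⊗ₜ[k] a)
  (hdstar : ∀ a : A, ∑ i ∈ s, y i ⊗ₜ[k] (z i * a * x i) = a ⊗ₜ[k] (1 : A))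

include hcen in
theorem sum_mul_mul_tmul_eq_one_tmul
    (hnorm : ∑ i ∈ s, (x i * y i) ⊗ₜ[k] z i = (1 : A) ⊗ₜ[k] (1 : A)) (a : A) :
    ∑ i ∈ s, (x i * a * y i) ⊗ₜ[k] z i = (1 : A) ⊗ₜ[k] a :=
  calc
    _ = (LinearMap.mul' k A).rTensor A (∑ i ∈ s, x i ⊗ₜ[k] (a * y i) ⊗ₜ[k] z i) := by
      simp [mul_assoc]
    _ = (LinearMap.mulRight k a).lTensor A (∑ i ∈ s, (x i * y i) ⊗ₜ[k] z i) := by simp [hcen]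
    _ = (1 : A) ⊗ₜ[k] a := by simp [hnorm]

include hcen in
theorem sum_tmul_mul_mul_eq_tmul_one
    (hnorm : ∑ i ∈ s, y i ⊗ₜ[k] (z i * x i) = (1 : A) ⊗ₜ[k] (1 : A)) (a : A) :
    ∑ i ∈ s, y i ⊗ₜ[k] (z i * a * x i) = a ⊗ₜ[k] (1 : A) := by
  let rotateMul : A ⊗[k] A ⊗[k] A →ₗ[k] A ⊗[k] A := (LinearMap.mul' k A).lTensor A ∘ₗ
    (TensorProduct.assoc k A A A).toLinearMap ∘ₗ
    (TensorProduct.comm k A (A ⊗[k] A)).toLinearMap ∘ₗ (TensorProduct.assoc k A A A).toLinearMap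
  calc
    _ = rotateMul (∑ i ∈ s, x i ⊗ₜ[k] y i ⊗ₜ[k] (z i * a)) := by simp [rotateMul, mul_assoc]
    _ = (LinearMap.mulLeft k a).rTensor A (∑ i ∈ s, y i ⊗ₜ[k] (z i * x i)) := by
      simp [rotateMul, ← hcen]
    _ = a ⊗ₜ[k] (1 : A) := by simp [hnorm]

include hdstar in
theorem tmul_tmul_one_tmul_eq_sum (p a r : A) :
    p ⊗ₜ[k] a ⊗ₜ[k] (1 : A) ⊗ₜ[k] r = ∑ j ∈ s, p ⊗ₜ[k] y j ⊗ₜ[k] (z j * a * x j) ⊗ₜ[k] r :=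
  (sum_apply_eq_of_sum_tmul_eq (LinearMap.mk₂ k (fun u v => p ⊗ₜ[k] u ⊗ₜ[k] v ⊗ₜ[k] r)
    (fun _ _ _ => by simp only [tmul_add, add_tmul])
    (fun _ _ _ => by simp only [tmul_smul, ← smul_tmul'])
    (fun _ _ _ => by simp only [tmul_add, add_tmul])
    (fun _ _ _ => by simp only [tmul_smul, ← smul_tmul'])) (hdstar a)).symm

include hdstar in
theorem tmul_tmul_mul_tmul_eq_sum (p b c a r : A) :
    p ⊗ₜ[k] b ⊗ₜ[k] (c * a) ⊗ₜ[k] r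
      = ∑ j ∈ s, (p * (z j * a * x j)) ⊗ₜ[k] b ⊗ₜ[k] (c * y j) ⊗ₜ[k] r := by
  simpa only [LinearMap.mk₂_apply, mul_one] using (sum_apply_eq_of_sum_tmul_eq
    (LinearMap.mk₂ k (fun u v => (p * v) ⊗ₜ[k] b ⊗ₜ[k] (c * u) ⊗ₜ[k] r)
      (fun _ _ _ => by simp only [mul_add, tmul_add, add_tmul])
      (fun _ _ _ => by simp only [mul_smul_comm, tmul_smul, ← smul_tmul'])
      (fun _ _ _ => by simp only [mul_add, add_tmul])
      (fun _ _ _ => by simp only [mul_smul_comm, ← smul_tmul'])) (hdstar a)).symm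

include hstar in
theorem sum_mul_mul_mul_tmul_eq_tmul (a b c d : A) :
    ∑ i ∈ s, (x i * a * y i * b) ⊗ₜ[k] c ⊗ₜ[k] d ⊗ₜ[k] z i = b ⊗ₜ[k] c ⊗ₜ[k] d ⊗ₜ[k] a := by
  simpa only [LinearMap.mk₂_apply, one_mul] using sum_apply_eq_of_sum_tmul_eq
    (LinearMap.mk₂ k (fun u v => (u * b) ⊗ₜ[k] c ⊗ₜ[k] d ⊗ₜ[k] v)
      (fun _ _ _ => by simp only [add_mul, add_tmul])
      (fun _ _ _ => by simp only [smul_mul_assoc, ← smul_tmul'])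
      (fun _ _ _ => by simp only [tmul_add])
      (fun _ _ _ => by simp only [tmul_smul])) (hstar a)

end RMatrix

/-- If `R ∈ A ⊗ A ⊗ A` satisfies `R¹ ⊗ aR² ⊗ R³ = R¹ ⊗ R² ⊗ R³a` for all
`a ∈ A`, `R¹R² ⊗ R³ = 1 ⊗ 1` and `R² ⊗ R³R¹ = 1 ⊗ 1`, then the hexagon-type identity
`R¹ ⊗ R² ⊗ 1 ⊗ R³ = r¹R¹ ⊗ r² ⊗ r³R² ⊗ R³` holds in `A ⊗ A ⊗ A ⊗ A`, where `r` is a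
second copy of `R`. -/
theorem first_hexagon_identity_of_R_matrix
    (k A : Type*) [CommRing k] [Ring A] [Algebra k A]
    (ι : Type*) (s : Finset ι) (x y z : ι → A)
    (hcen : ∀ a : A,
      ∑ i ∈ s, x i ⊗ₜ[k] (a * y i) ⊗ₜ[k] z i
        = ∑ i ∈ s, x i ⊗ₜ[k] y i ⊗ₜ[k] (z i * a))
    (hnorm1 : ∑ i ∈ s, (x i * y i) ⊗ₜ[k] z i = (1 : A) ⊗ₜ[k] (1 : A))
    (hnorm2 : ∑ i ∈ s, y i ⊗ₜ[k] (z i * x i) = (1 : A) ⊗ₜ[k] (1 : A)) :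
    ∑ i ∈ s, x i ⊗ₜ[k] y i ⊗ₜ[k] (1 : A) ⊗ₜ[k] z i
      = ∑ i ∈ s, ∑ j ∈ s,
          (x j * x i) ⊗ₜ[k] y j ⊗ₜ[k] (z j * y i) ⊗ₜ[k] z i := by
  have hstar := sum_mul_mul_tmul_eq_one_tmul hcen hnorm1
  have hdstar := sum_tmul_mul_mul_eq_tmul_one hcen hnorm2
  calc
    _ = ∑ i ∈ s, ∑ j ∈ s, x i ⊗ₜ[k] y j ⊗ₜ[k] (z j * (y i * x j)) ⊗ₜ[k] z i :=
      Finset.sum_congr rfl fun i _ => by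
        simp only [tmul_tmul_one_tmul_eq_sum hdstar (x i) (y i) (z i), mul_assoc]
    _ = ∑ i ∈ s, ∑ j ∈ s, ∑ l ∈ s,
          (x i * z l * y i * (x j * x l)) ⊗ₜ[k] y j ⊗ₜ[k] (z j * y l) ⊗ₜ[k] z i :=
      Finset.sum_congr rfl fun i _ => Finset.sum_congr rfl fun j _ => by
        simp only [tmul_tmul_mul_tmul_eq_sum hdstar (x i) (y j) (z j) (y i * x j) (z i), mul_assoc]
    _ = ∑ j ∈ s, ∑ l ∈ s, (x j * x l) ⊗ₜ[k] y j ⊗ₜ[k] (z j * y l) ⊗ₜ[k] z l := by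
      rw [Finset.sum_comm]
      refine Finset.sum_congr rfl fun j _ => ?_
      rw [Finset.sum_comm]
      exact Finset.sum_congr rfl fun l _ => sum_mul_mul_mul_tmul_eq_tmul hstar _ _ _ _
    _ = _ := Finset.sum_comm
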